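/- (Localization mass equals the atom of the limit measure.) If cos φ < |c|, then Σ_{x≥0, x even} L_m(x) = Σ_{x≥1, x odd} L_m(x) = C_m; if cos φ > −|c|, then for every r ∈ K_κ, Σ_{x≥0, x even} L_p^r(x) = Σ_{x≥1, x odd} L_p^r(x) = C_p^r. In particular the delta-measure weights C_m and C_p^r in the weak limit equal the total localization mass of L_m and L_p^r on each parity class. -/

import Mathlib

/-!
On each parity class the profile `δ₀(x) + (1 - δ₀(x)) q^(x-1) (1 + q)` is a geometric series
in `q²`, and both parity sums equal `1 / (1 - q)`. With `q = |a|² / K_±` and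
`|a|² + |c|² = 1` one has `K_± = |a|² + 2|c|(|c| ± cos φ)`, so `1 - q = 2|c|(|c| ± cos φ) / K_±`;
dividing the prefactor of `Γ_±` by it gives exactly the atom `C_m`, resp. `C_p^r`.
-/

noncomputable section

namespace QW

/-- Kronecker delta `δ_0(x)`. -/
def d0 (x : ℕ) : ℝ := if x = 0 then 1 else 0

def Kp (c : ℂ) : ℝ := ‖1 + c‖ ^ 2

def Km (c : ℂ) : ℝ := ‖1 - c‖ ^ 2

/-- `Γ_+(x)`. -/
def Gp (κ : ℕ) (a c : ℂ) (x : ℕ) : ℝ :=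
  (2 / (κ : ℝ)) ^ 2 * ‖c‖ ^ 2 * (Real.cos c.arg + ‖c‖) ^ 2 / Kp c ^ 2 *
    (d0 x + (1 - d0 x) * (‖a‖ ^ 2 / Kp c) ^ (x - 1) * (1 + ‖a‖ ^ 2 / Kp c))

/-- `Γ_-(x)`. -/
def Gm (κ : ℕ) (a c : ℂ) (x : ℕ) : ℝ :=
  (2 / (κ : ℝ)) ^ 2 * ‖c‖ ^ 2 * (Real.cos c.arg - ‖c‖) ^ 2 / Km c ^ 2 *
    (d0 x + (1 - d0 x) * (‖a‖ ^ 2 / Km c) ^ (x - 1) * (1 + ‖a‖ ^ 2 / Km c))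

/-- `L_m(x)`. -/
def Lm (κ : ℕ) (a c : ℂ) (ψ : Fin κ → ℂ) (x : ℕ) : ℝ :=
  Gm κ a c x * ‖∑ j, ψ j‖ ^ 2

/-- `L_p^r(x)`. -/
def Lp (κ : ℕ) (a c : ℂ) (ψ : Fin κ → ℂ) (r : Fin κ) (x : ℕ) : ℝ :=
  Gp κ a c x * ‖∑ j, (ψ j - ψ r)‖ ^ 2

/-- `C_m`. -/
def Cm (κ : ℕ) (c : ℂ) (ψ : Fin κ → ℂ) : ℝ :=
  (2 / (κ : ℝ)) ^ 2 * ‖c‖ * (‖c‖ - Real.cos c.arg) / (2 * Km c) *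
    ‖∑ j, ψ j‖ ^ 2

/-- `C_p^r`. -/
def Cp (κ : ℕ) (c : ℂ) (ψ : Fin κ → ℂ) (r : Fin κ) : ℝ :=
  (2 / (κ : ℝ)) ^ 2 * ‖c‖ * (‖c‖ + Real.cos c.arg) / (2 * Kp c) *
    ‖∑ j, (ψ j - ψ r)‖ ^ 2

/-- `Γ_±(x)` is a constant times `profile (|a|² / K_±) x`. -/
def profile (q : ℝ) (x : ℕ) : ℝ := d0 x + (1 - d0 x) * q ^ (x - 1) * (1 + q)

lemma profile_zero (q : ℝ) : profile q 0 = 1 := by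
  simp [profile, d0]

lemma profile_succ (q : ℝ) (n : ℕ) : profile q (n + 1) = q ^ n * (1 + q) := by
  simp [profile, d0]

lemma hasSum_profile_two_mul_add_one {q : ℝ} (hq : |q| < 1) :
    HasSum (fun n ↦ profile q (2 * n + 1)) (1 - q)⁻¹ := by
  have hq2 : |q ^ 2| < 1 := by rw [abs_pow]; exact pow_lt_one₀ (abs_nonneg q) hq two_ne_zero
  obtain ⟨hlo, hhi⟩ := abs_lt.1 hq
  have hne : 1 - q ^ 2 ≠ 0 := by nlinarith
  have hf : (fun n ↦ profile q (2 * n + 1)) = fun n ↦ (1 + q) * (q ^ 2) ^ n := by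
    ext n
    rw [profile_succ, pow_mul, mul_comm]
  have hval : (1 - q)⁻¹ = (1 + q) * (1 - q ^ 2)⁻¹ := by
    field_simp
    ring
  rw [hf, hval]
  exact (hasSum_geometric_of_abs_lt_one hq2).mul_left (1 + q)

lemma hasSum_profile_two_mul {q : ℝ} (hq : |q| < 1) :
    HasSum (fun n ↦ profile q (2 * n)) (1 - q)⁻¹ := by
  have hq2 : |q ^ 2| < 1 := by rw [abs_pow]; exact pow_lt_one₀ (abs_nonneg q) hq two_ne_zero
  obtain ⟨hlo, hhi⟩ := abs_lt.1 hq
  have hne : 1 - q ^ 2 ≠ 0 := by nlinarith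
  have hf : (fun n ↦ profile q (2 * (n + 1))) = fun n ↦ q * (1 + q) * (q ^ 2) ^ n := by
    ext n
    rw [show 2 * (n + 1) = 2 * n + 1 + 1 by ring, profile_succ, pow_succ, pow_mul]
    ring
  have hval : (1 - q)⁻¹ - profile q (2 * 0) = q * (1 + q) * (1 - q ^ 2)⁻¹ := by
    rw [mul_zero, profile_zero]
    field_simp
    ring
  rw [← hasSum_nat_add_iff' 1, Finset.sum_range_one, hval, hf]
  exact (hasSum_geometric_of_abs_lt_one hq2).mul_left (q * (1 + q))

lemma norm_one_sub_sq (c : ℂ) : ‖1 - c‖ ^ 2 = 1 + ‖c‖ ^ 2 - 2 * ‖c‖ * Real.cos c.arg := by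
  rw [mul_assoc, Complex.norm_mul_cos_arg, Complex.sq_norm, Complex.sq_norm,
    Complex.normSq_apply, Complex.normSq_apply]
  simp
  ring

lemma norm_one_add_sq (c : ℂ) : ‖1 + c‖ ^ 2 = 1 + ‖c‖ ^ 2 + 2 * ‖c‖ * Real.cos c.arg := by
  rw [mul_assoc, Complex.norm_mul_cos_arg, Complex.sq_norm, Complex.sq_norm,
    Complex.normSq_apply, Complex.normSq_apply]
  simp
  ring

lemma sum_norm_sq_col_of_mem_unitaryGroup {𝕜 n : Type*} [RCLike 𝕜] [Fintype n] [DecidableEq n]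
    {U : Matrix n n 𝕜} (hU : U ∈ Matrix.unitaryGroup n 𝕜) (j : n) :
    ∑ i, ‖U i j‖ ^ 2 = 1 := by
  have h : (star U * U) j j = 1 := by rw [Unitary.star_mul_self_of_mem hU, Matrix.one_apply_eq]
  simp only [Matrix.mul_apply, Matrix.star_apply, RCLike.star_def, RCLike.conj_mul] at h
  exact_mod_cast h

-- `w` is kept apart from `(u - t) ^ 2` so that `Γ_-` and `Γ_+` match the statement literally.
lemma hasSum_parity_weighted_profile {b u t w α K : ℝ} (hu : 0 < u) (ht : t < u)
    (ha : α ^ 2 + u ^ 2 = 1) (hw : w = (u - t) ^ 2) (hK : K = 1 + u ^ 2 - 2 * u * t) :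
    HasSum (fun n ↦ b * u ^ 2 * w / K ^ 2 * profile (α ^ 2 / K) (2 * n))
        (b * u * (u - t) / (2 * K)) ∧
      HasSum (fun n ↦ b * u ^ 2 * w / K ^ 2 * profile (α ^ 2 / K) (2 * n + 1))
        (b * u * (u - t) / (2 * K)) := by
  have hgap : 0 < 2 * u * (u - t) := by have := sub_pos.2 ht; positivity
  have hK' : K = α ^ 2 + 2 * u * (u - t) := by rw [hK, ← ha]; ring
  have hKpos : 0 < K := by rw [hK']; positivity
  have hq : |α ^ 2 / K| < 1 := by
    rw [abs_of_nonneg (by positivity), div_lt_one hKpos, hK']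
    linarith
  have hsum : b * u ^ 2 * w / K ^ 2 * (1 - α ^ 2 / K)⁻¹ = b * u * (u - t) / (2 * K) := by
    have hq' : 1 - α ^ 2 / K = 2 * u * (u - t) / K := by
      rw [eq_div_iff hKpos.ne', sub_mul, div_mul_cancel₀ _ hKpos.ne']
      linarith
    have hut : u - t ≠ 0 := (sub_pos.2 ht).ne'
    rw [hq', hw]
    field_simp
  rw [← hsum]
  exact ⟨(hasSum_profile_two_mul hq).mul_left _, (hasSum_profile_two_mul_add_one hq).mul_left _⟩

theorem localization_mass_general (κ : ℕ) (a b c d : ℂ)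
    (hU : !![a, b; c, d] ∈ Matrix.unitaryGroup (Fin 2) ℂ) (h0 : a * b * c * d ≠ 0)
    (ψ : Fin κ → ℂ) :
    (Real.cos c.arg < ‖c‖ →
        (∑' n : ℕ, Lm κ a c ψ (2 * n)) = Cm κ c ψ ∧
          (∑' n : ℕ, Lm κ a c ψ (2 * n + 1)) = Cm κ c ψ) ∧
      (-‖c‖ < Real.cos c.arg →
        ∀ r : Fin κ,
          (∑' n : ℕ, Lp κ a c ψ r (2 * n)) = Cp κ c ψ r ∧
            (∑' n : ℕ, Lp κ a c ψ r (2 * n + 1)) = Cp κ c ψ r) := by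
  have hc : 0 < ‖c‖ := norm_pos_iff.2 (right_ne_zero_of_mul (left_ne_zero_of_mul h0))
  have ha : ‖a‖ ^ 2 + ‖c‖ ^ 2 = 1 := by
    simpa using sum_norm_sq_col_of_mem_unitaryGroup hU 0
  refine ⟨fun ht ↦ ?_, fun ht r ↦ ?_⟩
  · obtain ⟨heven, hodd⟩ := hasSum_parity_weighted_profile (b := (2 / (κ : ℝ)) ^ 2)
      (w := (Real.cos c.arg - ‖c‖) ^ 2) (K := Km c) hc ht ha (by ring) (norm_one_sub_sq c)
    exact ⟨(heven.mul_right _).tsum_eq, (hodd.mul_right _).tsum_eq⟩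
  · obtain ⟨heven, hodd⟩ := hasSum_parity_weighted_profile (b := (2 / (κ : ℝ)) ^ 2)
      (t := -Real.cos c.arg) (w := (Real.cos c.arg + ‖c‖) ^ 2) (K := Kp c) hc (by linarith) ha
      (by ring) (by rw [Kp, norm_one_add_sq]; ring)
    rw [sub_neg_eq_add] at heven hodd
    exact ⟨(heven.mul_right _).tsum_eq, (hodd.mul_right _).tsum_eq⟩

/-- **Localization mass equals the atom of the limit measure.** -/
theorem localization_mass (κ : ℕ) (hκ : 1 ≤ κ) (a b c d : ℂ)
    (hU : !![a, b; c, d] ∈ Matrix.unitaryGroup (Fin 2) ℂ) (h0 : a * b * c * d ≠ 0)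
    (ψ : Fin κ → ℂ) :
    (Real.cos c.arg < ‖c‖ →
        (∑' n : ℕ, Lm κ a c ψ (2 * n)) = Cm κ c ψ ∧
          (∑' n : ℕ, Lm κ a c ψ (2 * n + 1)) = Cm κ c ψ) ∧
      (-‖c‖ < Real.cos c.arg →
        ∀ r : Fin κ,
          (∑' n : ℕ, Lp κ a c ψ r (2 * n)) = Cp κ c ψ r ∧
            (∑' n : ℕ, Lp κ a c ψ r (2 * n + 1)) = Cp κ c ψ r) :=
  localization_mass_general κ a b c d hU h0 ψ

end QW
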